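/- Let the combined domain–environment graph be connected, let the domain D be closed and connected with a nonempty set of concepts, let the environment E be disjoint from D, and let P be a nonempty maximal connected subset of the concepts of E. Then there exist a concept e in P, a link r among the links of E, and a concept d among the concepts of D such that the pair of endpoints of r is exactly {e, d}. Precisely: in the setting below, if D_V is nonempty, P ⊆ E_V is nonempty, the subgraph induced on P by the links of E_L having both endpoints in P is connected, and P is maximal with this property (no strictly larger subset P' with P ⊂ P' ⊆ E_V induces a connected subgraph), then there exist e ∈ P, r ∈ E_L, and d ∈ D_V with {src r, dst r} = {e, d}. -/

import Mathlib

/-- A sub-conception `(SV, SL)` is *closed* if every link in `SL` has both its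
source and destination concept in `SV`. -/
def SubConceptionClosed {V L : Type*} (src dst : L → V) (SV : Set V) (SL : Set L) : Prop :=
  ∀ l ∈ SL, src l ∈ SV ∧ dst l ∈ SV

/-- Adjacency via a link from `SL`, traversed in either direction. -/
def LinkAdj {V L : Type*} (src dst : L → V) (SL : Set L) (a b : V) : Prop :=
  ∃ l ∈ SL, (src l = a ∧ dst l = b) ∨ (src l = b ∧ dst l = a)

/-- A sub-conception `(SV, SL)` is *connected* if any two concepts in `SV` are
joined by a finite path of links from `SL`, traversed in either direction. -/
def SubConceptionConnected {V L : Type*} (src dst : L → V) (SV : Set V) (SL : Set L) : Prop :=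
  ∀ a ∈ SV, ∀ b ∈ SV, Relation.ReflTransGen (LinkAdj src dst SL) a b

theorem related_environment
    {V L : Type*} (src dst : L → V)
    (DV : Set V) (DL : Set L) (EV : Set V) (EL : Set L)
    (hVdisj : DV ∩ EV = ∅) (hLdisj : DL ∩ EL = ∅)
    (hDclosed : SubConceptionClosed src dst DV DL)
    (hDconn : SubConceptionConnected src dst DV DL)
    (hUclosed : SubConceptionClosed src dst (DV ∪ EV) (DL ∪ EL))
    (hUconn : SubConceptionConnected src dst (DV ∪ EV) (DL ∪ EL))
    (hDne : DV.Nonempty)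
    (P : Set V) (hPsub : P ⊆ EV) (hPne : P.Nonempty)
    (hPconn : SubConceptionConnected src dst P {l ∈ EL | src l ∈ P ∧ dst l ∈ P})
    (hPmax : ∀ P' : Set V, P ⊂ P' → P' ⊆ EV →
      ¬ SubConceptionConnected src dst P' {l ∈ EL | src l ∈ P' ∧ dst l ∈ P'}) :
    ∃ e ∈ P, ∃ r ∈ EL, ∃ d ∈ DV, ({src r, dst r} : Set V) = {e, d} := by
  obtain ⟨p, hp⟩ := hPne
  obtain ⟨d0, hd0⟩ := hDne
  have hpath : Relation.ReflTransGen (LinkAdj src dst (DL ∪ EL)) p d0 :=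
    hUconn p (Or.inr (hPsub hp)) d0 (Or.inl hd0)
  have key : ∀ a, Relation.ReflTransGen (LinkAdj src dst (DL ∪ EL)) a d0 →
      a ∈ P → ∃ e ∈ P, ∃ r ∈ EL, ∃ d ∈ DV, ({src r, dst r} : Set V) = {e, d} := by
    intro a h
    induction h using Relation.ReflTransGen.head_induction_on with
    | refl =>
      intro ha
      exact absurd (Set.mem_inter hd0 (hPsub ha)) (by simp [hVdisj])
    | head hab hbd ih =>
      rename_i a b
      intro ha
      obtain ⟨l, hl, hc⟩ := hab
      have haend : src l = a ∨ dst l = a := by rcases hc with ⟨h1, h2⟩ | ⟨h1, h2⟩ <;> simp [h1, h2]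
      have hbend : src l = b ∨ dst l = b := by rcases hc with ⟨h1, h2⟩ | ⟨h1, h2⟩ <;> simp [h1, h2]
      have hlE : l ∈ EL := by
        rcases hl with hlD | hlE
        · exfalso
          have haD : a ∈ DV := by
            rcases haend with h | h
            · exact h ▸ (hDclosed l hlD).1
            · exact h ▸ (hDclosed l hlD).2
          exact absurd (Set.mem_inter haD (hPsub ha)) (by simp [hVdisj])
        · exact hlE
      have hbU : b ∈ DV ∪ EV := by
        rcases hbend with h | h
        · exact h ▸ (hUclosed l (Or.inr hlE)).1
        · exact h ▸ (hUclosed l (Or.inr hlE)).2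
      rcases hbU with hbD | hbE
      · refine ⟨a, ha, l, hlE, b, hbD, ?_⟩
        rcases hc with ⟨h1, h2⟩ | ⟨h1, h2⟩
        · rw [h1, h2]
        · rw [h1, h2, Set.pair_comm]
      · by_cases hbP : b ∈ P
        · exact ih hbP
        · exfalso
          apply hPmax (insert b P) (Set.ssubset_insert hbP)
            (Set.insert_subset hbE hPsub)
          -- show connectivity of insert b P
          have hmono : {l' ∈ EL | src l' ∈ P ∧ dst l' ∈ P} ⊆
              {l' ∈ EL | src l' ∈ insert b P ∧ dst l' ∈ insert b P} := by
            rintro l' ⟨h1, h2, h3⟩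
            exact ⟨h1, Or.inr h2, Or.inr h3⟩
          have hlin : l ∈ {l' ∈ EL | src l' ∈ insert b P ∧ dst l' ∈ insert b P} := by
            rcases hc with ⟨h1, h2⟩ | ⟨h1, h2⟩ <;>
              exact ⟨hlE, by simp [h1, h2, ha]⟩
          have hab' : LinkAdj src dst {l' ∈ EL | src l' ∈ insert b P ∧ dst l' ∈ insert b P} a b :=
            ⟨l, hlin, hc⟩
          have hba' : LinkAdj src dst {l' ∈ EL | src l' ∈ insert b P ∧ dst l' ∈ insert b P} b a :=
            ⟨l, hlin, hc.symm⟩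
          intro x hx y hy
          have lift : ∀ u ∈ P, ∀ v ∈ P, Relation.ReflTransGen
              (LinkAdj src dst {l' ∈ EL | src l' ∈ insert b P ∧ dst l' ∈ insert b P}) u v :=
            fun u hu v hv => Relation.ReflTransGen.mono
              (fun x y ⟨l', hl', hc'⟩ => ⟨l', hmono hl', hc'⟩) u v (hPconn u hu v hv)
          rcases hx with hx | hx <;> rcases hy with hy | hy
          · subst hx; subst hy; exact Relation.ReflTransGen.refl
          · subst hx; exact Relation.ReflTransGen.head hba' (lift a ha y hy)
          · subst hy; exact (lift x hx a ha).tail hab'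
          · exact lift x hx y hy
  exact key p hpath hp
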